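/- arXiv:1012.3362 — 4 statements merged into one kernel-verified Lean document; each statement's English description precedes it below -/
import Mathlib

section
/- Let A be a Banach algebra with uniformly bounded automorphism group ψ_t (bound M), 0 < r < 1, and let |a|_r = sup_{t ≠ 0} |t|^{−r} ‖ψ_t(a) − a‖. If a ∈ A satisfies |a|_r < ∞ and a is invertible in A, then |a⁻¹|_r ≤ M‖a⁻¹‖² |a|_r < ∞. Hence the Hölder–Zygmund space Λ^∞_r(A) is inverse-closed in A. -/
open scoped ENNReal

/-- The Hölder–Zygmund seminorm `|a|_r = sup_{t ≠ 0} |t|^{-r} ‖ψ_t(a) - a‖`,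
valued in `ℝ≥0∞`. -/
noncomputable def hzSeminorm {A : Type*} [NormedRing A] [NormedAlgebra ℂ A] {d : ℕ}
    (ψ : (Fin d → ℝ) → (A ≃ₐ[ℂ] A)) (r : ℝ) (a : A) : ℝ≥0∞ :=
  ⨆ t : {t : Fin d → ℝ // t ≠ 0},
    ENNReal.ofReal (‖(t : Fin d → ℝ)‖ ^ (-r) * ‖ψ (t : Fin d → ℝ) a - a‖)

/-!
For an invertible `a` and any ring endomorphism `φ`,
`φ(a⁻¹) - a⁻¹ = φ(a⁻¹) (a - φ a) a⁻¹`. With `‖φ(a⁻¹)‖ ≤ M ‖a⁻¹‖` this gives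
`‖ψ_t(a⁻¹) - a⁻¹‖ ≤ M ‖a⁻¹‖² ‖ψ_t a - a‖` for every `t`, and the bound passes to the supremum
defining `|·|_r`.
-/

theorem map_inv_sub_inv_eq {A F : Type*} [Ring A] [FunLike F A A] [RingHomClass F A A]
    (φ : F) (u : Aˣ) :
    φ (↑u⁻¹ : A) - ↑u⁻¹ = φ (↑u⁻¹ : A) * (↑u - φ ↑u) * ↑u⁻¹ := by
  have hφ : φ (↑u⁻¹ : A) * φ ↑u = 1 := by rw [← map_mul, u.inv_mul, map_one]
  calc φ (↑u⁻¹ : A) - ↑u⁻¹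
      = φ (↑u⁻¹ : A) * (↑u * ↑u⁻¹) - (φ (↑u⁻¹ : A) * φ ↑u) * ↑u⁻¹ := by
        rw [hφ, u.mul_inv, mul_one, one_mul]
    _ = φ (↑u⁻¹ : A) * (↑u - φ ↑u) * ↑u⁻¹ := by noncomm_ring

theorem norm_map_inv_sub_inv_le {A F : Type*} [NormedRing A] [FunLike F A A]
    [RingHomClass F A A] (φ : F) (u : Aˣ) {M : ℝ}
    (hM : ‖φ (↑u⁻¹ : A)‖ ≤ M * ‖(↑u⁻¹ : A)‖) :
    ‖φ (↑u⁻¹ : A) - ↑u⁻¹‖ ≤ M * ‖(↑u⁻¹ : A)‖ ^ 2 * ‖φ ↑u - ↑u‖ :=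
  calc ‖φ (↑u⁻¹ : A) - ↑u⁻¹‖
      ≤ ‖φ (↑u⁻¹ : A)‖ * ‖(↑u : A) - φ ↑u‖ * ‖(↑u⁻¹ : A)‖ := by
        rw [map_inv_sub_inv_eq]
        exact (norm_mul_le _ _).trans (by gcongr; exact norm_mul_le _ _)
    _ ≤ M * ‖(↑u⁻¹ : A)‖ * ‖(↑u : A) - φ ↑u‖ * ‖(↑u⁻¹ : A)‖ := by gcongr
    _ = M * ‖(↑u⁻¹ : A)‖ ^ 2 * ‖φ ↑u - ↑u‖ := by rw [norm_sub_rev]; ring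

theorem hzSeminorm_le_ofReal_mul {A : Type*} [NormedRing A] [NormedAlgebra ℂ A] {d : ℕ}
    (ψ : (Fin d → ℝ) → (A ≃ₐ[ℂ] A)) (r C : ℝ) {a b : A}
    (h : ∀ t, ‖ψ t b - b‖ ≤ C * ‖ψ t a - a‖) :
    hzSeminorm ψ r b ≤ ENNReal.ofReal C * hzSeminorm ψ r a := by
  refine iSup_le fun t => ?_
  have hpow : 0 ≤ ‖(t : Fin d → ℝ)‖ ^ (-r) := Real.rpow_nonneg (norm_nonneg _) _
  calc ENNReal.ofReal (‖(t : Fin d → ℝ)‖ ^ (-r) * ‖ψ t b - b‖)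
      ≤ ENNReal.ofReal (C * (‖(t : Fin d → ℝ)‖ ^ (-r) * ‖ψ t a - a‖)) :=
        ENNReal.ofReal_le_ofReal
          ((mul_le_mul_of_nonneg_left (h t) hpow).trans_eq (mul_left_comm _ _ _))
    _ = ENNReal.ofReal C * ENNReal.ofReal (‖(t : Fin d → ℝ)‖ ^ (-r) * ‖ψ t a - a‖) :=
        ENNReal.ofReal_mul' (by positivity)
    _ ≤ ENNReal.ofReal C * hzSeminorm ψ r a := by
        gcongr
        exact le_iSup (fun t : {t : Fin d → ℝ // t ≠ 0} =>
          ENNReal.ofReal (‖(t : Fin d → ℝ)‖ ^ (-r) * ‖ψ t a - a‖)) t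

theorem stmt_9_general {A : Type*} [NormedRing A] [NormedAlgebra ℂ A]
    {d : ℕ} (ψ : (Fin d → ℝ) → (A ≃ₐ[ℂ] A))
    (M : ℝ) (hM : ∀ (t : Fin d → ℝ) (a : A), ‖ψ t a‖ ≤ M * ‖a‖)
    (r : ℝ)
    (u : Aˣ) (hu : hzSeminorm ψ r (↑u : A) < ⊤) :
    hzSeminorm ψ r (↑u⁻¹ : A) ≤
        ENNReal.ofReal (M * ‖(↑u⁻¹ : A)‖ ^ 2) * hzSeminorm ψ r (↑u : A) ∧
      hzSeminorm ψ r (↑u⁻¹ : A) < ⊤ := by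
  have hle := hzSeminorm_le_ofReal_mul ψ r (M * ‖(↑u⁻¹ : A)‖ ^ 2)
    fun t => norm_map_inv_sub_inv_le (ψ t) u (hM t _)
  exact ⟨hle, hle.trans_lt (ENNReal.mul_lt_top ENNReal.ofReal_lt_top hu)⟩

/-- If `a` has finite Hölder–Zygmund seminorm and is invertible in `A`, then
`|a⁻¹|_r ≤ M‖a⁻¹‖²|a|_r < ∞`; hence `Λ^∞_r(A)` is inverse-closed in `A`. -/
theorem stmt_9 {A : Type*} [NormedRing A] [NormedAlgebra ℂ A] [CompleteSpace A]
    {d : ℕ} (ψ : (Fin d → ℝ) → (A ≃ₐ[ℂ] A))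
    (hgrp : ∀ s t : Fin d → ℝ, ∀ a : A, ψ s (ψ t a) = ψ (s + t) a)
    (M : ℝ) (hM : ∀ (t : Fin d → ℝ) (a : A), ‖ψ t a‖ ≤ M * ‖a‖)
    (r : ℝ) (hr0 : 0 < r) (hr1 : r < 1)
    (u : Aˣ) (hu : hzSeminorm ψ r (↑u : A) < ⊤) :
    hzSeminorm ψ r (↑u⁻¹ : A) ≤
        ENNReal.ofReal (M * ‖(↑u⁻¹ : A)‖ ^ 2) * hzSeminorm ψ r (↑u : A) ∧
      hzSeminorm ψ r (↑u⁻¹ : A) < ⊤ :=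
  stmt_9_general ψ M hM r u hu
end

section
/- Let A be a Banach algebra with uniformly bounded automorphism group ψ (bound M), and ω^k_h(a) = sup_{|t| ≤ h} ‖(ψ_t − id)^k a‖ the k-th modulus of smoothness. Then ω^k_h(a) ≍ sup{‖Δ_{h_1}⋯Δ_{h_k} a‖ : |h_j| ≤ h, 1 ≤ j ≤ k}, with constants depending only on k and M. -/
/-- The difference operator `Δ_t = ψ_t - id` as an endomorphism of `A`. -/
noncomputable def diffOp {A : Type*} [NormedRing A] [NormedAlgebra ℂ A] {d : ℕ}
    (ψ : (Fin d → ℝ) → (A ≃ₐ[ℂ] A)) (t : Fin d → ℝ) : Module.End ℂ A :=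
  (ψ t).toLinearMap - LinearMap.id

/-!
Put `N = k(k-1)+1` and `u_j = h_j / N`, so that `Δ_{h_j} = ψ_{u_j}^N - 1`. In `ℂ[X_1, …, X_k]`,
with `1 + X_j` standing for `ψ_{u_j}`, the product `∏ ((1 + X_j)^N - 1)` lies in the ideal
generated by the `((1 + X)^γ - 1)^k` with `|γ| ≤ N`, because it is a multiple of `X_1 ⋯ X_k` and
every monomial of degree `≥ k` lies in that ideal. The latter holds by downward induction on the
degree: a monomial of degree `> k(k-1)` is a multiple of some `X_j^k = ((1 + X_j) - 1)^k`, and for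
a monomial `X^c` of degree `m` the alternating sum `∑_{β ≤ c} (-1)^{c-β} C(c,β) ((1 + X)^β - 1)^m`
is `m! X^c` plus terms of degree `> m`. Evaluating this ideal membership at the commuting
operators `ψ_{u_j}` writes `Δ_{h_1} ⋯ Δ_{h_k}` as a combination of operators `Δ_v^k` with `|v| ≤ h`
whose coefficients are fixed polynomials in the `ψ_{u_j}`, hence bounded in terms of `M` alone.
-/

open MvPolynomial Finset

section IdealPowers

variable {R : Type*} [CommRing R] {J : Ideal R}

theorem one_add_pow_sub_one_sub_mem_sq {y : R} (hy : y ∈ J) (n : ℕ) :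
    (1 + y) ^ n - 1 - n * y ∈ J ^ 2 := by
  induction n with
  | zero => simp
  | succ n ih =>
    have hyy : n * y * y ∈ J ^ 2 := sq J ▸ Ideal.mul_mem_mul (J.mul_mem_left _ hy) hy
    have : (1 + y) ^ (n + 1) - 1 - (n + 1 : ℕ) * y =
        (1 + y) * ((1 + y) ^ n - 1 - n * y) + n * y * y := by
      push_cast; ring
    rw [this]
    exact add_mem (Ideal.mul_mem_left _ _ ih) hyy

theorem pow_sub_pow_mem_pow_succ {a b : R} (hab : a - b ∈ J ^ 2) (hb : b ∈ J) (n : ℕ) :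
    a ^ n - b ^ n ∈ J ^ (n + 1) := by
  have ha : a ∈ J := by simpa using J.add_mem (Ideal.pow_le_self two_ne_zero hab) hb
  induction n with
  | zero => simp
  | succ n ih =>
    have : a ^ (n + 1) - b ^ (n + 1) = a * (a ^ n - b ^ n) + (a - b) * b ^ n := by ring
    rw [this]
    refine add_mem (pow_succ' J (n + 1) ▸ Ideal.mul_mem_mul ha ih) ?_
    rw [show n + 1 + 1 = 2 + n by omega, pow_add]
    exact Ideal.mul_mem_mul hab (Ideal.pow_mem_pow hb n)

theorem prod_pow_sub_prod_pow_mem_pow_succ {ι : Type*} (s : Finset ι) {a b : ι → R}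
    (hab : ∀ i ∈ s, a i - b i ∈ J ^ 2) (hb : ∀ i ∈ s, b i ∈ J) (c : ι → ℕ) :
    ∏ i ∈ s, a i ^ c i - ∏ i ∈ s, b i ^ c i ∈ J ^ (∑ i ∈ s, c i + 1) := by
  classical
  induction s using Finset.induction_on with
  | empty => simp
  | insert i s hi ih =>
    simp only [mem_insert, forall_eq_or_imp] at hab hb
    have ha : ∀ j ∈ s, a j ∈ J := fun j hj =>
      by simpa using J.add_mem (Ideal.pow_le_self two_ne_zero (hab.2 j hj)) (hb.2 j hj)
    have hA : ∏ j ∈ s, a j ^ c j ∈ J ^ ∑ j ∈ s, c j := by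
      rw [← Finset.prod_pow_eq_pow_sum]
      exact Ideal.prod_mem_prod fun j hj => Ideal.pow_mem_pow (ha j hj) _
    rw [prod_insert hi, prod_insert hi, sum_insert hi]
    have : a i ^ c i * ∏ j ∈ s, a j ^ c j - b i ^ c i * ∏ j ∈ s, b j ^ c j
        = (a i ^ c i - b i ^ c i) * ∏ j ∈ s, a j ^ c j
          + b i ^ c i * (∏ j ∈ s, a j ^ c j - ∏ j ∈ s, b j ^ c j) := by ring
    rw [this, show c i + ∑ j ∈ s, c j + 1 = c i + 1 + ∑ j ∈ s, c j by omega]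
    refine add_mem (pow_add J _ _ ▸ Ideal.mul_mem_mul (pow_sub_pow_mem_pow_succ hab.1 hb.1 _) hA) ?_
    rw [add_assoc, add_comm 1, pow_add]
    exact Ideal.mul_mem_mul (Ideal.pow_mem_pow hb.1 _) (ih hab.2 hb.2)

end IdealPowers

theorem alternating_sum_range_choose_mul_pow_self {R : Type*} [CommRing R] (m : ℕ) :
    ∑ i ∈ range (m + 1), (-1 : R) ^ (m - i) * m.choose i * (i : R) ^ m = m.factorial := by
  have := congrFun (fwdDiff_iter_eq_factorial (R := R) (n := m)) 0
  rw [fwdDiff_iter_eq_sum_shift] at this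
  simpa [zsmul_eq_mul] using this

noncomputable section ShiftedPowers

variable {σ R : Type*} [Fintype σ] [CommRing R]

def shiftedMonomial (γ : σ → ℕ) : MvPolynomial σ R := ∏ j, (1 + X j) ^ γ j

variable (σ R) in
def shiftedPowIdeal (k n : ℕ) : Ideal (MvPolynomial σ R) :=
  Ideal.span ((fun γ => (shiftedMonomial γ - 1) ^ k) '' {γ | ∑ j, γ j ≤ n})

theorem shiftedMonomial_sub_one_pow_mem_shiftedPowIdeal {k n m : ℕ} {γ : σ → ℕ}
    (hγ : ∑ j, γ j ≤ n) (hkm : k ≤ m) :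
    (shiftedMonomial γ - 1 : MvPolynomial σ R) ^ m ∈ shiftedPowIdeal σ R k n := by
  rw [← Nat.add_sub_cancel' hkm, pow_add]
  exact Ideal.mul_mem_right _ _ (Ideal.subset_span ⟨γ, hγ, rfl⟩)

theorem X_pow_mem_shiftedPowIdeal {k n : ℕ} (hn : 0 < n) (j : σ) :
    (X j : MvPolynomial σ R) ^ k ∈ shiftedPowIdeal σ R k n := by
  classical
  have h : (shiftedMonomial (Pi.single j 1) : MvPolynomial σ R) = 1 + X j := by
    simp [shiftedMonomial, Pi.single_apply, pow_ite]
  simpa [h] using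
    shiftedMonomial_sub_one_pow_mem_shiftedPowIdeal (R := R) (γ := Pi.single j 1) (by simpa) le_rfl

theorem monomial_mem_shiftedPowIdeal_of_lt {k n : ℕ} (hn : 0 < n) (c : σ →₀ ℕ)
    (hc : Fintype.card σ * (k - 1) < c.degree) : monomial c 1 ∈ shiftedPowIdeal σ R k n := by
  obtain ⟨j, hj⟩ : ∃ j, k ≤ c j := by
    by_contra! hlt
    have : c.degree ≤ Fintype.card σ * (k - 1) := by
      rw [Finsupp.degree_eq_sum]
      simpa using Finset.sum_le_card_nsmul univ c (k - 1) fun j _ => by have := hlt j; omega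
    omega
  rw [← add_tsub_cancel_of_le (Finsupp.single_le_iff.mpr hj), ← mul_one (1 : R), ← monomial_mul,
    ← X_pow_eq_monomial]
  exact Ideal.mul_mem_right _ _ (X_pow_mem_shiftedPowIdeal hn j)

theorem sum_choose_mul_shiftedMonomial_sub_one_pow [DecidableEq σ] (c : σ → ℕ) (m : ℕ) :
    ∑ β ∈ Fintype.piFinset fun j => range (c j + 1),
        (∏ j, (-1 : MvPolynomial σ R) ^ (c j - β j) * (c j).choose (β j)) *
          (shiftedMonomial β - 1) ^ m =
      ∑ i ∈ range (m + 1), (-1 : MvPolynomial σ R) ^ (m - i) * m.choose i *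
        ∏ j, ((1 + X j) ^ i - 1) ^ c j := by
  have hβ : ∀ i, ∏ j, ((1 + X j) ^ i - 1 : MvPolynomial σ R) ^ c j =
      ∑ β ∈ Fintype.piFinset fun j => range (c j + 1),
        (∏ j, (-1 : MvPolynomial σ R) ^ (c j - β j) * (c j).choose (β j)) *
          shiftedMonomial β ^ i := by
    intro i
    simp_rw [sub_eq_add_neg]
    rw [prod_congr rfl fun j _ => add_pow ((1 + X j) ^ i) (-1) (c j), prod_univ_sum]
    simp_rw [shiftedMonomial, ← prod_pow, ← prod_mul_distrib]
    refine sum_congr rfl fun β _ => prod_congr rfl fun j _ => ?_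
    rw [← pow_mul, ← pow_mul, mul_comm i]
    ring
  simp_rw [hβ, mul_sum, sub_eq_add_neg (shiftedMonomial _), add_pow, mul_sum]
  rw [sum_comm]
  refine sum_congr rfl fun β _ => sum_congr rfl fun i _ => ?_
  ring

theorem prod_one_add_X_pow_sub_one_pow_sub_mem_pow_idealOfVars (c : σ → ℕ) (i : ℕ) :
    ∏ j, ((1 + X j) ^ i - 1 : MvPolynomial σ R) ^ c j -
        (i : MvPolynomial σ R) ^ (∑ j, c j) * ∏ j, X j ^ c j ∈
      idealOfVars σ R ^ (∑ j, c j + 1) := by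
  have hX : ∀ j, (X j : MvPolynomial σ R) ∈ idealOfVars σ R := fun j => Ideal.subset_span ⟨j, rfl⟩
  have := prod_pow_sub_prod_pow_mem_pow_succ univ
    (fun j _ => one_add_pow_sub_one_sub_mem_sq (hX j) i)
    (fun j _ => (idealOfVars σ R).mul_mem_left _ (hX j)) c
  simpa [mul_pow, prod_mul_distrib, prod_pow_eq_pow_sum] using this

variable {K : Type*} [Field K] [CharZero K]

theorem monomial_mem_shiftedPowIdeal_of_pow_succ_le {k n : ℕ} (c : σ →₀ ℕ) (hk : k ≤ c.degree)
    (hn : c.degree ≤ n) (h : idealOfVars σ K ^ (c.degree + 1) ≤ shiftedPowIdeal σ K k n) :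
    monomial c 1 ∈ shiftedPowIdeal σ K k n := by
  classical
  rw [Finsupp.degree_eq_sum] at *
  set m := ∑ j, c j
  set S := ∑ β ∈ Fintype.piFinset fun j => range (c j + 1),
    (∏ j, (-1 : MvPolynomial σ K) ^ (c j - β j) * (c j).choose (β j)) *
      (shiftedMonomial β - 1) ^ m with hS_def
  have hS : S ∈ shiftedPowIdeal σ K k n := by
    refine Ideal.sum_mem _ fun β hβ =>
      Ideal.mul_mem_left _ _ (shiftedMonomial_sub_one_pow_mem_shiftedPowIdeal ?_ hk)
    have : ∀ j, β j ≤ c j := fun j =>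
      Nat.lt_succ_iff.mp (mem_range.mp (Fintype.mem_piFinset.mp hβ j))
    exact (sum_le_sum fun j _ => this j).trans hn
  have hdiff :
      S - (m.factorial : MvPolynomial σ K) * ∏ j, X j ^ c j ∈ idealOfVars σ K ^ (m + 1) := by
    rw [hS_def, sum_choose_mul_shiftedMonomial_sub_one_pow,
      ← alternating_sum_range_choose_mul_pow_self, sum_mul, ← sum_sub_distrib]
    refine Ideal.sum_mem _ fun i _ => ?_
    convert Ideal.mul_mem_left _ ((-1) ^ (m - i) * m.choose i : MvPolynomial σ K)
      (prod_one_add_X_pow_sub_one_pow_sub_mem_pow_idealOfVars (R := K) c i) using 1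
    ring
  have hfac : (m.factorial : MvPolynomial σ K) * ∏ j, X j ^ c j ∈ shiftedPowIdeal σ K k n := by
    simpa using sub_mem hS (h hdiff)
  have : monomial c (1 : K) =
      C (m.factorial : K)⁻¹ * ((m.factorial : MvPolynomial σ K) * ∏ j, X j ^ c j) := by
    rw [← mul_assoc, ← map_natCast (C : K →+* MvPolynomial σ K), ← C_mul,
      inv_mul_cancel₀ (Nat.cast_ne_zero.mpr m.factorial_ne_zero), C_1, one_mul, monomial_eq, C_1,
      one_mul, Finsupp.prod_pow]
  rw [this]
  exact Ideal.mul_mem_left _ _ hfac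

theorem pow_idealOfVars_le_shiftedPowIdeal {k n m : ℕ} (hn : Fintype.card σ * (k - 1) < n)
    (hkm : k ≤ m) : idealOfVars σ K ^ m ≤ shiftedPowIdeal σ K k n := by
  have large : ∀ m, Fintype.card σ * (k - 1) < m →
      idealOfVars σ K ^ m ≤ shiftedPowIdeal σ K k n := by
    intro m hm
    rw [pow_idealOfVars_eq_span, Ideal.span_le]
    rintro _ ⟨c, hc, rfl⟩
    exact monomial_mem_shiftedPowIdeal_of_lt (by omega) c (by simp_all)
  rcases lt_or_ge (Fintype.card σ * (k - 1)) m with hm | hm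
  · exact large m hm
  refine Nat.decreasingInduction' (fun j hj hmj ih => ?_) (Nat.le_succ_of_le hm)
    (large _ (by omega))
  rw [pow_idealOfVars_eq_span, Ideal.span_le]
  rintro _ ⟨c, hc : c.degree = j, rfl⟩
  exact monomial_mem_shiftedPowIdeal_of_pow_succ_le c (by omega) (by omega) (hc ▸ ih)

theorem prod_one_add_X_pow_sub_one_mem_shiftedPowIdeal {n : ℕ}
    (hn : Fintype.card σ * (Fintype.card σ - 1) < n) :
    ∏ j, ((1 + X j) ^ n - 1 : MvPolynomial σ K) ∈ shiftedPowIdeal σ K (Fintype.card σ) n := by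
  have hX : ∏ j, (X j : MvPolynomial σ K) ∈ idealOfVars σ K ^ Fintype.card σ := by
    rw [← card_univ, ← prod_const]
    exact Ideal.prod_mem_prod fun j _ => Ideal.subset_span ⟨j, rfl⟩
  rw [prod_congr rfl fun j _ => (geom_sum_mul (1 + X j) n).symm, prod_mul_distrib]
  simp only [add_sub_cancel_left]
  exact Ideal.mul_mem_left _ _ (pow_idealOfVars_le_shiftedPowIdeal hn le_rfl hX)

end ShiftedPowers

noncomputable section DiffCalculus

open Multiplicative

variable {𝕜 G E σ : Type*} [NormedField 𝕜] [AddCommMonoid G] [SeminormedAddCommGroup E]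
  [NormedSpace 𝕜 E] (T : Multiplicative G →* Module.End 𝕜 E)

/-- `X j ↦ T (u j) - 1`. It factors through the group algebra of `G` because `aeval` needs a
commutative target, which `Module.End 𝕜 E` is not. -/
def diffCalculus (u : σ → G) : MvPolynomial σ 𝕜 →ₐ[𝕜] Module.End 𝕜 E :=
  (AddMonoidAlgebra.lift 𝕜 (Module.End 𝕜 E) G T).comp
    (aeval fun j => AddMonoidAlgebra.single (u j) 1 - 1)

theorem diffCalculus_one_add_X_pow (u : σ → G) (j : σ) (n : ℕ) :
    diffCalculus T u ((1 + X j) ^ n) = T (ofAdd (n • u j)) := by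
  simp [diffCalculus, AddMonoidAlgebra.single_pow]

theorem diffCalculus_X (u : σ → G) (j : σ) : diffCalculus T u (X j) = T (ofAdd (u j)) - 1 := by
  simp [diffCalculus]

theorem diffCalculus_shiftedMonomial [Fintype σ] (u : σ → G) (γ : σ → ℕ) :
    diffCalculus T u (shiftedMonomial γ) = T (ofAdd (∑ j, γ j • u j)) := by
  simp [diffCalculus, shiftedMonomial, AddMonoidAlgebra.single_pow, AddMonoidAlgebra.prod_single]

theorem diffCalculus_prod {k : ℕ} (u : Fin k → G) (q : Fin k → MvPolynomial (Fin k) 𝕜) :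
    diffCalculus T u (∏ j, q j) = (List.ofFn fun j => diffCalculus T u (q j)).prod := by
  rw [← List.prod_ofFn, map_list_prod, List.map_ofFn]
  rfl

variable {T} {M : ℝ} (hT : ∀ g z, ‖T g z‖ ≤ M * ‖z‖)
include hT

theorem exists_norm_diffCalculus_apply_le (p : MvPolynomial σ 𝕜) :
    ∃ C, 0 ≤ C ∧ ∀ u z, ‖diffCalculus T u p z‖ ≤ C * ‖z‖ := by
  induction p using MvPolynomial.induction_on with
  | C a => exact ⟨‖a‖, norm_nonneg a, fun u z => by simp [norm_smul]⟩
  | add p q hp hq =>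
    obtain ⟨Cp, hCp, hp⟩ := hp
    obtain ⟨Cq, hCq, hq⟩ := hq
    refine ⟨Cp + Cq, add_nonneg hCp hCq, fun u z => ?_⟩
    rw [map_add, LinearMap.add_apply, add_mul]
    exact (norm_add_le _ _).trans (add_le_add (hp u z) (hq u z))
  | mul_X p j hp =>
    obtain ⟨Cp, hCp, hp⟩ := hp
    refine ⟨Cp * (|M| + 1), by positivity, fun u z => ?_⟩
    rw [map_mul, Module.End.mul_apply, diffCalculus_X, LinearMap.sub_apply, Module.End.one_apply]
    calc _ ≤ Cp * ‖T (ofAdd (u j)) z - z‖ := hp u _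
      _ ≤ Cp * ((|M| + 1) * ‖z‖) := by
        gcongr
        calc _ ≤ ‖T (ofAdd (u j)) z‖ + ‖z‖ := norm_sub_le _ _
          _ ≤ M * ‖z‖ + ‖z‖ := by gcongr; exact hT _ z
          _ ≤ (|M| + 1) * ‖z‖ := by nlinarith [le_abs_self M, norm_nonneg z]
      _ = _ := by ring

theorem exists_norm_diffCalculus_apply_le_of_mem [Fintype σ] {k n : ℕ} {p : MvPolynomial σ 𝕜}
    (hp : p ∈ shiftedPowIdeal σ 𝕜 k n) :
    ∃ C, ∀ u a W,
      (∀ γ : σ → ℕ, ∑ j, γ j ≤ n → ‖((T (ofAdd (∑ j, γ j • u j)) - 1) ^ k) a‖ ≤ W) →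
        ‖diffCalculus T u p a‖ ≤ C * W := by
  induction hp using Submodule.span_induction with
  | mem _ hx =>
    obtain ⟨γ, hγ, rfl⟩ := hx
    refine ⟨1, fun u a W hW => ?_⟩
    simpa [diffCalculus_shiftedMonomial] using hW γ hγ
  | zero => exact ⟨0, fun u a W _ => by simp⟩
  | add p q _ _ hp hq =>
    obtain ⟨Cp, hp⟩ := hp
    obtain ⟨Cq, hq⟩ := hq
    refine ⟨Cp + Cq, fun u a W hW => ?_⟩
    rw [map_add, LinearMap.add_apply, add_mul]
    exact (norm_add_le _ _).trans (add_le_add (hp u a W hW) (hq u a W hW))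
  | smul r p _ hp =>
    obtain ⟨Cr, hCr, hr⟩ := exists_norm_diffCalculus_apply_le hT r
    obtain ⟨Cp, hp⟩ := hp
    refine ⟨Cr * Cp, fun u a W hW => ?_⟩
    rw [smul_eq_mul, map_mul, Module.End.mul_apply, mul_assoc]
    exact (hr u _).trans (mul_le_mul_of_nonneg_left (hp u a W hW) hCr)

theorem exists_norm_list_prod_sub_one_le (k : ℕ) :
    ∃ C, ∀ (u : Fin k → G) (z : E),
      ‖(List.ofFn fun j => T (ofAdd (u j)) - 1).prod z‖ ≤ C * ‖z‖ := by
  obtain ⟨C, -, hC⟩ := exists_norm_diffCalculus_apply_le hT (∏ j : Fin k, X j)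
  exact ⟨C, fun u z => by simpa [diffCalculus_prod, diffCalculus_X] using hC u z⟩

theorem exists_norm_list_prod_sub_one_le_of_norm_pow_le [CharZero 𝕜] (k : ℕ) :
    ∃ C, ∀ (u : Fin k → G) (a : E) (W : ℝ),
      (∀ γ : Fin k → ℕ, ∑ j, γ j ≤ k * (k - 1) + 1 →
        ‖((T (ofAdd (∑ j, γ j • u j)) - 1) ^ k) a‖ ≤ W) →
      ‖(List.ofFn fun j => T (ofAdd ((k * (k - 1) + 1) • u j)) - 1).prod a‖ ≤ C * W := by
  have hp := prod_one_add_X_pow_sub_one_mem_shiftedPowIdeal (σ := Fin k) (K := 𝕜)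
    (n := k * (k - 1) + 1) (by simp)
  rw [Fintype.card_fin] at hp
  obtain ⟨C, hC⟩ := exists_norm_diffCalculus_apply_le_of_mem hT hp
  exact ⟨C, fun u a W hW => by
    simpa [diffCalculus_prod, diffCalculus_one_add_X_pow] using hC u a W hW⟩

end DiffCalculus

theorem norm_sum_nsmul_inv_smul_le {F ι : Type*} [SeminormedAddCommGroup F] [NormedSpace ℝ F]
    (s : Finset ι) {γ : ι → ℕ} {N : ℕ} (hγ : ∑ i ∈ s, γ i ≤ N) {v : ι → F} {h : ℝ}
    (hv : ∀ i ∈ s, ‖v i‖ ≤ h) (hh : 0 ≤ h) : ‖∑ i ∈ s, γ i • ((N : ℝ)⁻¹ • v i)‖ ≤ h :=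
  calc _ ≤ ∑ i ∈ s, γ i * ((N : ℝ)⁻¹ * h) := norm_sum_le_of_le _ fun i hi => by
        refine norm_nsmul_le.trans (mul_le_mul_of_nonneg_left ?_ (Nat.cast_nonneg _))
        rw [norm_smul, norm_inv, Real.norm_natCast]
        exact mul_le_mul_of_nonneg_left (hv i hi) (by positivity)
    _ ≤ N * ((N : ℝ)⁻¹ * h) := by
        rw [← sum_mul]
        exact mul_le_mul_of_nonneg_right (by exact_mod_cast hγ) (by positivity)
    _ ≤ h := by
        rw [← mul_assoc]
        exact mul_le_of_le_one_left hh mul_inv_le_one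

def autRep {𝕜 A G : Type*} [CommSemiring 𝕜] [Semiring A] [Algebra 𝕜 A] [AddMonoid G]
    (ψ : G → A ≃ₐ[𝕜] A) (hgrp : ∀ s t : G, ∀ a : A, ψ s (ψ t a) = ψ (s + t) a) :
    Multiplicative G →* Module.End 𝕜 A where
  toFun t := (ψ t.toAdd).toLinearMap
  map_one' := LinearMap.ext fun a => (ψ 0).injective (by simpa using hgrp 0 0 a)
  map_mul' s t := LinearMap.ext fun a => (hgrp s.toAdd t.toAdd a).symm

section ModulusOfSmoothness

variable {A : Type*} [NormedRing A] [NormedAlgebra ℂ A] {d : ℕ}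
  (ψ : (Fin d → ℝ) → (A ≃ₐ[ℂ] A)) (k : ℕ)

def powNormSet (a : A) (h : ℝ) : Set ℝ :=
  {x | ∃ t : Fin d → ℝ, ‖t‖ ≤ h ∧ x = ‖(diffOp ψ t ^ k) a‖}

def prodNormSet (a : A) (h : ℝ) : Set ℝ :=
  {x | ∃ ts : Fin k → (Fin d → ℝ), (∀ j, ‖ts j‖ ≤ h) ∧
    x = ‖(List.ofFn fun j => diffOp ψ (ts j)).prod a‖}

theorem powNormSet_subset_prodNormSet (a : A) (h : ℝ) :
    powNormSet ψ k a h ⊆ prodNormSet ψ k a h := by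
  rintro _ ⟨t, ht, rfl⟩
  exact ⟨fun _ => t, fun _ => ht, by rw [List.ofFn_const, List.prod_replicate]⟩

theorem powNormSet_nonempty (a : A) {h : ℝ} (hh : 0 ≤ h) : (powNormSet ψ k a h).Nonempty :=
  ⟨_, 0, by simpa using hh, rfl⟩

variable {ψ} (hgrp : ∀ s t : Fin d → ℝ, ∀ a : A, ψ s (ψ t a) = ψ (s + t) a)
  {M : ℝ} (hM : ∀ (t : Fin d → ℝ) (a : A), ‖ψ t a‖ ≤ M * ‖a‖)
include hgrp hM

theorem bddAbove_prodNormSet (a : A) (h : ℝ) : BddAbove (prodNormSet ψ k a h) := by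
  obtain ⟨C, hC⟩ := exists_norm_list_prod_sub_one_le (T := autRep ψ hgrp) hM k
  exact ⟨C * ‖a‖, by rintro _ ⟨ts, -, rfl⟩; exact hC ts a⟩

theorem exists_sSup_prodNormSet_le :
    ∃ C, 0 < C ∧ ∀ (a : A) (h : ℝ), 0 ≤ h →
      sSup (prodNormSet ψ k a h) ≤ C * sSup (powNormSet ψ k a h) := by
  obtain ⟨C, hC⟩ := exists_norm_list_prod_sub_one_le_of_norm_pow_le (T := autRep ψ hgrp) hM k
  refine ⟨max C 1, by positivity, fun a h hh => ?_⟩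
  have hsub := powNormSet_subset_prodNormSet ψ k a h
  have hbdd := (bddAbove_prodNormSet k hgrp hM a h).mono hsub
  have h0 : 0 ≤ sSup (powNormSet ψ k a h) :=
    Real.sSup_nonneg (by rintro _ ⟨t, -, rfl⟩; exact norm_nonneg _)
  refine csSup_le ((powNormSet_nonempty ψ k a hh).mono hsub) ?_
  rintro _ ⟨ts, hts, rfl⟩
  set N := k * (k - 1) + 1
  have hscale : ∀ j, N • ((N : ℝ)⁻¹ • ts j) = ts j := fun j => by
    rw [← Nat.cast_smul_eq_nsmul ℝ, smul_inv_smul₀ (by positivity)]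
  have := hC (fun j => (N : ℝ)⁻¹ • ts j) a _ fun γ hγ =>
    le_csSup hbdd ⟨_, norm_sum_nsmul_inv_smul_le univ hγ (fun j _ => hts j) hh, rfl⟩
  simp only [hscale] at this
  exact this.trans (mul_le_mul_of_nonneg_right (le_max_left _ _) h0)

end ModulusOfSmoothness

theorem stmt_11_general {A : Type*} [NormedRing A] [NormedAlgebra ℂ A]
    {d : ℕ} (ψ : (Fin d → ℝ) → (A ≃ₐ[ℂ] A))
    (hgrp : ∀ s t : Fin d → ℝ, ∀ a : A, ψ s (ψ t a) = ψ (s + t) a)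
    (M : ℝ) (hM : ∀ (t : Fin d → ℝ) (a : A), ‖ψ t a‖ ≤ M * ‖a‖)
    (k : ℕ) :
    ∃ c₁ c₂ : ℝ, 0 < c₁ ∧ 0 < c₂ ∧ ∀ (a : A) (h : ℝ), 0 < h →
      (c₁ * sSup {x : ℝ | ∃ t : Fin d → ℝ, ‖t‖ ≤ h ∧ x = ‖(diffOp ψ t ^ k) a‖} ≤
          sSup {x : ℝ | ∃ ts : Fin k → (Fin d → ℝ), (∀ j, ‖ts j‖ ≤ h) ∧
            x = ‖(List.ofFn fun j => diffOp ψ (ts j)).prod a‖}) ∧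
        sSup {x : ℝ | ∃ ts : Fin k → (Fin d → ℝ), (∀ j, ‖ts j‖ ≤ h) ∧
            x = ‖(List.ofFn fun j => diffOp ψ (ts j)).prod a‖} ≤
          c₂ * sSup {x : ℝ | ∃ t : Fin d → ℝ, ‖t‖ ≤ h ∧ x = ‖(diffOp ψ t ^ k) a‖} := by
  obtain ⟨C, hC, hle⟩ := exists_sSup_prodNormSet_le k hgrp hM
  refine ⟨1, C, one_pos, hC, fun a h hh => ⟨?_, hle a h hh.le⟩⟩
  rw [one_mul]
  exact csSup_le_csSup (bddAbove_prodNormSet k hgrp hM a h) (powNormSet_nonempty ψ k a hh.le)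
    (powNormSet_subset_prodNormSet ψ k a h)

/-- The modulus of smoothness `ω^k_h(a) = sup_{|t| ≤ h} ‖Δ_t^k a‖` is equivalent,
with constants depending only on `k` and `M`, to
`sup {‖Δ_{h₁}⋯Δ_{h_k} a‖ : |h_j| ≤ h}`. -/
theorem stmt_11 {A : Type*} [NormedRing A] [NormedAlgebra ℂ A] [CompleteSpace A]
    {d : ℕ} (ψ : (Fin d → ℝ) → (A ≃ₐ[ℂ] A))
    (hgrp : ∀ s t : Fin d → ℝ, ∀ a : A, ψ s (ψ t a) = ψ (s + t) a)
    (M : ℝ) (hM : ∀ (t : Fin d → ℝ) (a : A), ‖ψ t a‖ ≤ M * ‖a‖)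
    (k : ℕ) :
    ∃ c₁ c₂ : ℝ, 0 < c₁ ∧ 0 < c₂ ∧ ∀ (a : A) (h : ℝ), 0 < h →
      (c₁ * sSup {x : ℝ | ∃ t : Fin d → ℝ, ‖t‖ ≤ h ∧ x = ‖(diffOp ψ t ^ k) a‖} ≤
          sSup {x : ℝ | ∃ ts : Fin k → (Fin d → ℝ), (∀ j, ‖ts j‖ ≤ h) ∧
            x = ‖(List.ofFn fun j => diffOp ψ (ts j)).prod a‖}) ∧
        sSup {x : ℝ | ∃ ts : Fin k → (Fin d → ℝ), (∀ j, ‖ts j‖ ≤ h) ∧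
            x = ‖(List.ofFn fun j => diffOp ψ (ts j)).prod a‖} ≤
          c₂ * sSup {x : ℝ | ∃ t : Fin d → ℝ, ‖t‖ ≤ h ∧ x = ‖(diffOp ψ t ^ k) a‖} :=
  stmt_11_general ψ hgrp M hM k
end

section
/- Let A be a homogeneous matrix algebra over ℤ^d with the automorphism group χ_t(A)(k,l) = e^{2πi(k−l)·t} A(k,l). A matrix A ∈ A is banded with bandwidth N (i.e., A = Σ_{|m|_∞ ≤ N} Â(m)) if and only if A is N-bandlimited, i.e., ‖δ^α(A)‖_A ≤ C(2πN)^{|α|} for all multi-indices α, where δ is the canonical generator tuple of χ. -/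
section BandlimitAux

open Complex Finset

/-- target symbol function -/
noncomputable def auxF (n : ℕ) (r : ℤ) : ℂ := (2 * Real.pi * Complex.I * (r : ℂ)) ^ n

/-- interpolation coefficient (complex form) -/
noncomputable def auxC (N n : ℕ) (s : Fin (2*N+1)) : ℂ :=
  (((2*N+1:ℕ):ℂ))⁻¹ * ∑ r ∈ Finset.Icc (-(N:ℤ)) (N:ℤ), auxF n r *
    Complex.exp (2 * Real.pi * Complex.I * ((-r : ℤ) * s / ((2*N+1:ℕ))))

/-- interpolation coefficient (real form) -/
noncomputable def auxG (N n : ℕ) (s : Fin (2*N+1)) : ℝ := (auxC N n s).re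


lemma aux_sum_exp (M : ℕ) (hM : 0 < M) (x : ℤ) :
    ∑ s : Fin M, Complex.exp (2 * Real.pi * Complex.I * (x * s / M)) =
      if (M : ℤ) ∣ x then (M : ℂ) else 0 := by
  have hMC : (M : ℂ) ≠ 0 := Nat.cast_ne_zero.2 hM.ne'
  set ζ : ℂ := Complex.exp (2 * Real.pi * Complex.I * (x / M)) with hζ
  have hpow : ∀ s : Fin M, Complex.exp (2 * Real.pi * Complex.I * (x * s / M)) = ζ ^ (s : ℕ) := by
    intro s
    rw [hζ, ← Complex.exp_nat_mul]
    ring_nf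
  have hsum : ∑ s : Fin M, Complex.exp (2 * Real.pi * Complex.I * (x * s / M))
      = ∑ i ∈ Finset.range M, ζ ^ i := by
    simp only [hpow]
    exact Fin.sum_univ_eq_sum_range _ M
  rw [hsum]
  by_cases hdvd : (M : ℤ) ∣ x
  · obtain ⟨q, hq⟩ := hdvd
    have hζ1 : ζ = 1 := by
      rw [hζ, hq]
      push_cast
      rw [mul_div_cancel_left₀ (q:ℂ) hMC]
      have := Complex.exp_int_mul_two_pi_mul_I q
      rw [← this]
      ring_nf
    rw [if_pos ⟨q, hq⟩]
    simp [hζ1]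
  · have hζM : ζ ^ M = 1 := by
      rw [hζ, ← Complex.exp_nat_mul]
      have : (M : ℂ) * (2 * Real.pi * Complex.I * (x / M)) = x * (2 * Real.pi * Complex.I) := by
        field_simp
      rw [this, Complex.exp_int_mul_two_pi_mul_I]
    have hζ1 : ζ ≠ 1 := by
      intro h1
      apply hdvd
      rw [hζ, Complex.exp_eq_one_iff] at h1
      obtain ⟨n, hn⟩ := h1
      have h2 : ((x : ℂ) / M - n) * (2 * Real.pi * Complex.I) = 0 := by
        rw [sub_mul, sub_eq_zero]; linear_combination hn
      have h3 : (2 * (Real.pi : ℂ) * Complex.I) ≠ 0 := by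
        simp [Real.pi_ne_zero, Complex.I_ne_zero]
      have h4 : (x : ℂ) / M = n := by
        rcases mul_eq_zero.1 h2 with h | h
        · exact sub_eq_zero.1 h
        · exact absurd h h3
      have h5 : (x : ℂ) = n * M := by
        field_simp at h4; linear_combination h4
      have h6 : (x : ℤ) = n * M := by exact_mod_cast h5
      exact ⟨n, by linarith⟩
    rw [geom_sum_eq hζ1, hζM, sub_self, zero_div]
    simp [hdvd]

lemma aux_interp (N : ℕ) (f : ℤ → ℂ) (m : ℤ) (hm : |m| ≤ (N : ℤ)) :
    ∑ s : Fin (2*N+1), ((((2*N+1 : ℕ) : ℂ))⁻¹ *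
        ∑ r ∈ Finset.Icc (-(N:ℤ)) (N:ℤ), f r *
          Complex.exp (2 * Real.pi * Complex.I * ((-r : ℤ) * s / ((2*N+1:ℕ))))) *
      Complex.exp (2 * Real.pi * Complex.I * (m * s / ((2*N+1:ℕ)))) = f m := by
  have hM : 0 < 2*N+1 := Nat.succ_pos _
  have hMC : ((2*N+1:ℕ):ℂ) ≠ 0 := Nat.cast_ne_zero.2 hM.ne'
  have step : ∀ s : Fin (2*N+1), ∀ r : ℤ,
      (f r * Complex.exp (2 * Real.pi * Complex.I * ((-r : ℤ) * s / ((2*N+1:ℕ))))) *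
        Complex.exp (2 * Real.pi * Complex.I * (m * s / ((2*N+1:ℕ)))) =
      f r * Complex.exp (2 * Real.pi * Complex.I * ((m - r : ℤ) * s / ((2*N+1:ℕ)))) := by
    intro s r
    rw [mul_assoc, ← Complex.exp_add]
    congr 2
    push_cast
    field_simp
    ring
  calc ∑ s : Fin (2*N+1), ((((2*N+1 : ℕ) : ℂ))⁻¹ *
        ∑ r ∈ Finset.Icc (-(N:ℤ)) (N:ℤ), f r *
          Complex.exp (2 * Real.pi * Complex.I * ((-r : ℤ) * s / ((2*N+1:ℕ))))) *
      Complex.exp (2 * Real.pi * Complex.I * (m * s / ((2*N+1:ℕ))))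
      = (((2*N+1 : ℕ) : ℂ))⁻¹ * ∑ s : Fin (2*N+1), ∑ r ∈ Finset.Icc (-(N:ℤ)) (N:ℤ),
          f r * Complex.exp (2 * Real.pi * Complex.I * ((m - r : ℤ) * s / ((2*N+1:ℕ)))) := by
        rw [Finset.mul_sum]
        refine Finset.sum_congr rfl fun s _ => ?_
        rw [mul_assoc, Finset.sum_mul]
        refine congrArg _ (Finset.sum_congr rfl fun r _ => step s r)
    _ = (((2*N+1 : ℕ) : ℂ))⁻¹ * ∑ r ∈ Finset.Icc (-(N:ℤ)) (N:ℤ), ∑ s : Fin (2*N+1),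
          f r * Complex.exp (2 * Real.pi * Complex.I * ((m - r : ℤ) * s / ((2*N+1:ℕ)))) := by
        rw [Finset.sum_comm]
    _ = (((2*N+1 : ℕ) : ℂ))⁻¹ * ∑ r ∈ Finset.Icc (-(N:ℤ)) (N:ℤ),
          f r * (if ((2*N+1:ℕ) : ℤ) ∣ (m - r) then ((2*N+1:ℕ) : ℂ) else 0) := by
        refine congrArg _ (Finset.sum_congr rfl fun r _ => ?_)
        rw [← Finset.mul_sum, aux_sum_exp _ hM]
    _ = f m := by
        rw [Finset.sum_eq_single m]
        · rw [if_pos (by simp)]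
          field_simp
        · intro r hr hrm
          rw [if_neg, mul_zero]
          intro hdvd
          have h0 : m - r = 0 := by
            refine Int.eq_zero_of_abs_lt_dvd hdvd ?_
            simp only [Finset.mem_Icc] at hr
            rw [abs_le] at hm
            push_cast
            rw [abs_lt]
            omega
          have : r = m := by omega
          exact hrm this
        · intro hmem
          exact absurd (Finset.mem_Icc.2 (abs_le.1 hm)) hmem


lemma aux_coef_real (N : ℕ) (f : ℤ → ℂ) (hf : ∀ r, f (-r) = starRingEnd ℂ (f r))
    (s : Fin (2*N+1)) :
    ((((((2*N+1:ℕ):ℂ))⁻¹ * ∑ r ∈ Finset.Icc (-(N:ℤ)) (N:ℤ), f r *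
        Complex.exp (2 * Real.pi * Complex.I * ((-r : ℤ) * s / ((2*N+1:ℕ))))).re : ℝ) : ℂ) =
    (((2*N+1:ℕ):ℂ))⁻¹ * ∑ r ∈ Finset.Icc (-(N:ℤ)) (N:ℤ), f r *
        Complex.exp (2 * Real.pi * Complex.I * ((-r : ℤ) * s / ((2*N+1:ℕ)))) := by
  rw [← Complex.conj_eq_iff_re]
  rw [map_mul, map_inv₀, map_natCast, map_sum]
  congr 1
  refine Finset.sum_equiv (Equiv.neg ℤ) (fun i => by simp [Finset.mem_Icc]; omega)
    (fun r hr => ?_)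
  rw [map_mul, ← hf, ← Complex.exp_conj]
  simp only [Equiv.neg_apply, neg_neg]
  congr 2
  simp only [map_mul, map_div₀, Complex.conj_I, map_ofNat, Complex.conj_ofReal,
    map_intCast, map_natCast]
  push_cast
  ring

lemma aux_coef_bd (N : ℕ) (f : ℤ → ℂ) (B : ℝ)
    (hB : ∀ r ∈ Finset.Icc (-(N:ℤ)) (N:ℤ), ‖f r‖ ≤ B) (s : Fin (2*N+1)) :
    ‖(((2*N+1:ℕ):ℂ))⁻¹ * ∑ r ∈ Finset.Icc (-(N:ℤ)) (N:ℤ), f r *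
        Complex.exp (2 * Real.pi * Complex.I * ((-r : ℤ) * s / ((2*N+1:ℕ))))‖ ≤ B := by
  have hB0 : 0 ≤ B := le_trans (norm_nonneg _) (hB 0 (by simp))
  rw [norm_mul, norm_inv]
  have hcard : (Finset.Icc (-(N:ℤ)) (N:ℤ)).card = 2*N+1 := by
    rw [Int.card_Icc]; omega
  have hnorm1 : ∀ r : ℤ,
      ‖Complex.exp (2 * Real.pi * Complex.I * ((-r : ℤ) * s / ((2*N+1:ℕ))))‖ = 1 := by
    intro r
    have h : (2 * Real.pi * Complex.I * ((-r : ℤ) * s / ((2*N+1:ℕ)))) =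
        (((2 * Real.pi * ((-(r:ℝ)) * (s:ℕ) / ((2*N+1:ℕ):ℝ)) : ℝ)) : ℂ) * Complex.I := by
      push_cast; ring
    rw [h, Complex.norm_exp_ofReal_mul_I]
  calc ‖((2*N+1:ℕ):ℂ)‖⁻¹ * ‖∑ r ∈ Finset.Icc (-(N:ℤ)) (N:ℤ), f r *
        Complex.exp (2 * Real.pi * Complex.I * ((-r : ℤ) * s / ((2*N+1:ℕ))))‖
      ≤ ‖((2*N+1:ℕ):ℂ)‖⁻¹ * ((2*N+1 : ℕ) * B) := by
        refine mul_le_mul_of_nonneg_left ?_ (by positivity)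
        refine le_trans (norm_sum_le _ _) ?_
        refine le_trans (Finset.sum_le_card_nsmul _ _ B ?_) ?_
        · intro r hr
          rw [norm_mul, hnorm1, mul_one]
          exact hB r hr
        · rw [hcard, nsmul_eq_mul]
    _ = B := by
        rw [Complex.norm_natCast]
        rw [inv_mul_cancel_left₀ (by positivity : ((2*N+1:ℕ):ℝ) ≠ 0)]

lemma auxF_herm (n : ℕ) (r : ℤ) : auxF n (-r) = starRingEnd ℂ (auxF n r) := by
  simp only [auxF, map_pow, map_mul, Complex.conj_I, map_ofNat, Complex.conj_ofReal,
    map_intCast]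
  push_cast
  ring

lemma auxG_cast (N n : ℕ) (s : Fin (2*N+1)) : ((auxG N n s : ℝ) : ℂ) = auxC N n s :=
  aux_coef_real N (auxF n) (auxF_herm n) s

lemma auxF_bd (N n : ℕ) : ∀ r ∈ Finset.Icc (-(N:ℤ)) (N:ℤ),
    ‖auxF n r‖ ≤ (2 * Real.pi * N) ^ n := by
  intro r hr
  rw [auxF, norm_pow]
  refine pow_le_pow_left₀ (norm_nonneg _) ?_ n
  rw [norm_mul]
  have h2pi : ‖(2 * (Real.pi:ℂ) * Complex.I)‖ = 2 * Real.pi := by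
    simp [norm_mul, Real.pi_nonneg, abs_of_nonneg]
  rw [h2pi, Complex.norm_intCast]
  have : |(r:ℝ)| ≤ (N:ℝ) := by
    rw [Finset.mem_Icc] at hr
    have : |r| ≤ (N:ℤ) := abs_le.2 hr
    exact_mod_cast this
  nlinarith [Real.pi_pos, abs_nonneg (r:ℝ)]

lemma auxG_bd (N n : ℕ) (s : Fin (2*N+1)) : |auxG N n s| ≤ (2 * Real.pi * N) ^ n :=
  (Complex.abs_re_le_norm _).trans (aux_coef_bd N (auxF n) _ (auxF_bd N n) s)

lemma auxG_interp (N n : ℕ) (m : ℤ) (hm : |m| ≤ (N:ℤ)) :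
    ∑ s : Fin (2*N+1), ((auxG N n s : ℝ) : ℂ) *
      Complex.exp (2 * Real.pi * Complex.I * (m * s / ((2*N+1:ℕ)))) = auxF n m := by
  simp only [auxG_cast, auxC]
  exact aux_interp N (auxF n) m hm

end BandlimitAux


/-- A matrix `A` in a homogeneous matrix algebra `𝒜` over `ℤ^d` (abstractly: a Banach
algebra whose elements have matrix entries `ent a k l`, with entries controlled by the
norm, and carrying the uniformly bounded modulation action `χ_t`) is banded with
bandwidth `N` if and only if it is `N`-bandlimited, i.e. there is `C > 0` with
`‖δ^α(a)‖ ≤ C (2πN)^{|α|}` for all multi-indices `α`, where `δ^α(a)` is the element of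
`𝒜` whose entries are `(2πi(k-l))^α · ent a k l`. -/
theorem stmt_12 {d : ℕ} {A : Type*} [NormedRing A] [NormedAlgebra ℂ A] [CompleteSpace A]
    (ent : A → (Fin d → ℤ) → (Fin d → ℤ) → ℂ)
    (hent_inj : Function.Injective ent)
    (hent_add : ∀ a b k l, ent (a + b) k l = ent a k l + ent b k l)
    (Cemb : ℝ) (hent_bd : ∀ a k l, ‖ent a k l‖ ≤ Cemb * ‖a‖)
    (M : ℝ) (hM : 0 < M)
    (hhom : ∀ t : Fin d → ℝ, ∀ a : A, ∃ b : A, ‖b‖ ≤ M * ‖a‖ ∧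
      ∀ k l, ent b k l =
        Complex.exp (2 * Real.pi * Complex.I * (∑ j, ((k j : ℝ) - (l j : ℝ)) * t j)) *
          ent a k l)
    (a : A) (N : ℕ) (hN : 0 < N) :
    (∀ k l : Fin d → ℤ, (∃ j, (N : ℤ) < |k j - l j|) → ent a k l = 0) ↔
      (∃ C : ℝ, 0 < C ∧ ∀ α : Fin d → ℕ, ∃ b : A,
        (∀ k l, ent b k l =
            (∏ j, (2 * Real.pi * Complex.I * ((k j : ℂ) - (l j : ℂ))) ^ α j) *
              ent a k l) ∧
          ‖b‖ ≤ C * (2 * Real.pi * N) ^ (∑ j, α j)) := by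
  constructor
  · intro hband
    classical
    choose bb hbb1 hbb2 using hhom
    refine ⟨((2*N+1:ℕ):ℝ)^d * M * ‖a‖ + 1, by positivity, fun α => ?_⟩
    set ts : (Fin d → Fin (2*N+1)) → (Fin d → ℝ) :=
      fun s j => (s j : ℕ) / ((2*N+1:ℕ):ℝ) with hts
    set b : A := ∑ s : Fin d → Fin (2*N+1), (∏ j, auxG N (α j) (s j)) • bb (ts s) a with hb
    have hentb : ∀ k l, ent b k l =
        ∑ s : Fin d → Fin (2*N+1),
          ((∏ j, auxG N (α j) (s j) : ℝ) : ℂ) * ent (bb (ts s) a) k l := by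
      intro k l
      set F : A →+ ℂ := AddMonoidHom.mk' (fun x => ent x k l) (fun x y => hent_add x y k l)
        with hF
      have hFc : Continuous F :=
        AddMonoidHomClass.continuous_of_bound F Cemb (fun x => hent_bd x k l)
      have hFb : ent b k l = F b := rfl
      rw [hFb, hb, map_sum]
      refine Finset.sum_congr rfl fun s _ => ?_
      rw [map_real_smul F hFc]
      rw [Complex.real_smul]
      rfl
    refine ⟨b, fun k l => ?_, ?_⟩
    · -- entry identity
      rw [hentb k l]
      have hsplit : ∀ s : Fin d → Fin (2*N+1),
          ent (bb (ts s) a) k l =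
            (∏ j, Complex.exp (2 * Real.pi * Complex.I *
              (((k j - l j : ℤ) : ℂ) * ((s j : ℕ)) / ((2*N+1:ℕ))))) * ent a k l := by
        intro s
        rw [hbb2 (ts s) a k l]
        congr 1
        rw [← Complex.exp_sum]
        congr 1
        simp only [hts]
        push_cast
        rw [Finset.mul_sum]
        exact Finset.sum_congr rfl fun j _ => by push_cast; ring
      by_cases hout : ∃ j, (N : ℤ) < |k j - l j|
      · rw [hband k l hout, mul_zero]
        refine Finset.sum_eq_zero fun s _ => ?_
        rw [hsplit s, hband k l hout, mul_zero, mul_zero]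
      · push_neg at hout
        have key : ∑ s : Fin d → Fin (2*N+1),
            ((∏ j, auxG N (α j) (s j) : ℝ) : ℂ) *
              (∏ j, Complex.exp (2 * Real.pi * Complex.I *
                (((k j - l j : ℤ) : ℂ) * ((s j : ℕ)) / ((2*N+1:ℕ))))) =
            ∏ j, (2 * Real.pi * Complex.I * ((k j : ℂ) - (l j : ℂ))) ^ α j := by
          have lhs_eq : ∀ s : Fin d → Fin (2*N+1),
              ((∏ j, auxG N (α j) (s j) : ℝ) : ℂ) *
                (∏ j, Complex.exp (2 * Real.pi * Complex.I *
                  (((k j - l j : ℤ) : ℂ) * ((s j : ℕ)) / ((2*N+1:ℕ))))) =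
              ∏ j, (((auxG N (α j) (s j) : ℝ) : ℂ) *
                Complex.exp (2 * Real.pi * Complex.I *
                  (((k j - l j : ℤ) : ℂ) * ((s j : ℕ)) / ((2*N+1:ℕ))))) := by
            intro s
            rw [Finset.prod_mul_distrib]
            push_cast
            ring
          simp only [lhs_eq]
          have hps := Fintype.prod_sum (fun j (u : Fin (2*N+1)) =>
            ((auxG N (α j) u : ℝ) : ℂ) * Complex.exp (2 * Real.pi * Complex.I *
              (((k j - l j : ℤ) : ℂ) * ((u : ℕ)) / ((2*N+1:ℕ)))))
          rw [← hps]
          refine Finset.prod_congr rfl fun j _ => ?_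
          rw [auxG_interp N (α j) (k j - l j) (hout j)]
          rw [auxF]
          push_cast
          ring
        calc ∑ s : Fin d → Fin (2*N+1),
            ((∏ j, auxG N (α j) (s j) : ℝ) : ℂ) * ent (bb (ts s) a) k l
            = (∑ s : Fin d → Fin (2*N+1),
                ((∏ j, auxG N (α j) (s j) : ℝ) : ℂ) *
                  (∏ j, Complex.exp (2 * Real.pi * Complex.I *
                    (((k j - l j : ℤ) : ℂ) * ((s j : ℕ)) / ((2*N+1:ℕ)))))) * ent a k l := by
              rw [Finset.sum_mul]
              refine Finset.sum_congr rfl fun s _ => ?_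
              rw [hsplit s]; ring
          _ = _ := by rw [key]
    · -- norm bound
      have hterm : ∀ s : Fin d → Fin (2*N+1),
          ‖(∏ j, auxG N (α j) (s j)) • bb (ts s) a‖ ≤
            (2 * Real.pi * N) ^ (∑ j, α j) * (M * ‖a‖) := by
        intro s
        rw [norm_smul, Real.norm_eq_abs]
        have h1 : |∏ j, auxG N (α j) (s j)| ≤ (2 * Real.pi * N) ^ (∑ j, α j) := by
          calc |∏ j, auxG N (α j) (s j)| = ∏ j, |auxG N (α j) (s j)| :=
                Finset.abs_prod _ _
            _ ≤ ∏ j, (2 * Real.pi * N) ^ (α j) :=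
                Finset.prod_le_prod (fun _ _ => abs_nonneg _) (fun j _ => auxG_bd N (α j) (s j))
            _ = (2 * Real.pi * N) ^ (∑ j, α j) :=
                Finset.prod_pow_eq_pow_sum _ _ _
        exact mul_le_mul h1 (hbb1 (ts s) a) (norm_nonneg _) (by positivity)
      calc ‖b‖ ≤ ∑ s : Fin d → Fin (2*N+1),
            ‖(∏ j, auxG N (α j) (s j)) • bb (ts s) a‖ := by
            rw [hb]; exact norm_sum_le _ _
        _ ≤ ∑ _s : Fin d → Fin (2*N+1), (2 * Real.pi * N) ^ (∑ j, α j) * (M * ‖a‖) :=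
            Finset.sum_le_sum (fun s _ => hterm s)
        _ = ((2*N+1:ℕ):ℝ)^d * M * ‖a‖ * (2 * Real.pi * N) ^ (∑ j, α j) := by
            rw [Finset.sum_const, nsmul_eq_mul]
            simp [Fintype.card_fun]
            ring
        _ ≤ (((2*N+1:ℕ):ℝ)^d * M * ‖a‖ + 1) * (2 * Real.pi * N) ^ (∑ j, α j) := by
            have hpow : (0:ℝ) ≤ (2 * Real.pi * N) ^ (∑ j, α j) := by positivity
            nlinarith
  · rintro ⟨C, hC, hCb⟩ k l ⟨j, hj⟩
    have hqR : (N : ℝ) < |(k j : ℝ) - (l j : ℝ)| := by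
      have : ((N : ℤ) : ℝ) < (|k j - l j| : ℤ) := by exact_mod_cast hj
      simpa [push_cast] using (by push_cast at this ⊢; exact this : (N:ℝ) < |(k j : ℝ) - l j|)
    set q : ℝ := |(k j : ℝ) - (l j : ℝ)| with hqdef
    have hq0 : 0 < q := lt_of_le_of_lt (by positivity) hqR
    have key : ∀ n : ℕ, ‖ent a k l‖ ≤ (|Cemb| * C) * ((N : ℝ) / q) ^ n := by
      intro n
      obtain ⟨b, hb1, hb2⟩ := hCb (fun j' => if j' = j then n else 0)
      have hsum : (∑ j', if j' = j then n else 0) = n := by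
        simp [Finset.sum_ite_eq' Finset.univ j (fun _ => n)]
      rw [hsum] at hb2
      have h1 : ent b k l = (2 * Real.pi * Complex.I * ((k j : ℂ) - (l j : ℂ))) ^ n *
          ent a k l := by
        rw [hb1 k l]
        congr 1
        rw [Finset.prod_eq_single j]
        · simp
        · intro j' _ hj'
          simp [hj']
        · simp
      have h2 : ‖ent b k l‖ = (2 * Real.pi * q) ^ n * ‖ent a k l‖ := by
        rw [h1, norm_mul, norm_pow]
        congr 2
        rw [norm_mul]
        have : ((k j : ℂ) - (l j : ℂ)) = (((k j : ℝ) - (l j : ℝ) : ℝ) : ℂ) := by push_cast; ring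
        rw [this, Complex.norm_real, Real.norm_eq_abs]
        have h2pi : ‖(2 * (Real.pi : ℂ) * Complex.I)‖ = 2 * Real.pi := by
          simp [norm_mul, Real.pi_nonneg, abs_of_nonneg]
        rw [h2pi]
      have h3 : (2 * Real.pi * q) ^ n * ‖ent a k l‖ ≤ (|Cemb| * C) * (2 * Real.pi * N) ^ n := by
        rw [← h2]
        calc ‖ent b k l‖ ≤ Cemb * ‖b‖ := hent_bd b k l
          _ ≤ |Cemb| * ‖b‖ := mul_le_mul_of_nonneg_right (le_abs_self _) (norm_nonneg _)
          _ ≤ |Cemb| * (C * (2 * Real.pi * N) ^ n) :=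
              mul_le_mul_of_nonneg_left hb2 (abs_nonneg _)
          _ = (|Cemb| * C) * (2 * Real.pi * N) ^ n := by ring
      have hpow : (0:ℝ) < (2 * Real.pi * q) ^ n := by positivity
      rw [mul_comm] at h3
      rw [← le_div_iff₀ hpow] at h3
      refine h3.trans (le_of_eq ?_)
      rw [mul_div_assoc, ← div_pow]
      congr 2
      field_simp
    have hr1 : (N : ℝ) / q < 1 := (div_lt_one hq0).2 hqR
    have hr0 : (0:ℝ) ≤ (N : ℝ) / q := by positivity
    have htend : Filter.Tendsto (fun n : ℕ => (|Cemb| * C) * ((N : ℝ) / q) ^ n)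
        Filter.atTop (nhds 0) := by
      have := tendsto_pow_atTop_nhds_zero_of_lt_one hr0 hr1
      simpa using (this.const_mul (|Cemb| * C))
    have h0 : ‖ent a k l‖ ≤ 0 :=
      ge_of_tendsto htend (Filter.Eventually.of_forall key)
    simpa using norm_le_zero_iff.1 h0
end

section
/- For the Schur algebra S^∞_r (r ≥ 0) of matrices A over ℤ^d with ‖A‖ = sup_{k,l} |A(k,l)|(1+|k−l|)^r < ∞: if A, B ∈ S^∞_r and r > d, then AB ∈ S^∞_r with ‖AB‖ ≤ C_r ‖A‖‖B‖ for a constant C_r depending only on r and d. -/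
/-!
Write `w(x) = (1 + |x|)^(-r)` with `|·|` the `ℓ¹` norm. Since `1 + |k - l|` is at most
`(1 + |k - m|) + (1 + |m - l|)`, we get
`(1 + |k - l|)^r ≤ 2^r ((1 + |k - m|)^r + (1 + |m - l|)^r)`,
hence `w(k - m) w(m - l) ≤ 2^r (w(k - m) + w(m - l)) w(k - l)`. Summing over `m` gives
`∑ₘ w(k - m) w(m - l) ≤ 2^(r+1) (∑ₓ w(x)) w(k - l)`, which bounds the entries of `AB`.
The sum `∑ₓ w(x)` is finite for `r > d` because `∏ⱼ (1 + |xⱼ|) ≤ (1 + |x|)^d`, so `w` is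
dominated by a product of one-dimensional `p`-series with exponent `r / d > 1`.
-/

open Real Finset

lemma Real.add_rpow_le_two_rpow_mul_rpow_add_rpow {a b p : ℝ} (ha : 0 ≤ a) (hb : 0 ≤ b)
    (hp : 0 ≤ p) : (a + b) ^ p ≤ 2 ^ p * (a ^ p + b ^ p) := calc
  (a + b) ^ p ≤ (2 * max a b) ^ p := by
    rw [two_mul]; gcongr; exacts [le_max_left a b, le_max_right a b]
  _ = 2 ^ p * max a b ^ p := mul_rpow zero_le_two (le_max_of_le_left ha)
  _ = 2 ^ p * max (a ^ p) (b ^ p) := by rw [rpow_max ha hb hp]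
  _ ≤ 2 ^ p * (a ^ p + b ^ p) := by
    gcongr; exact max_le_add_of_nonneg (rpow_nonneg ha p) (rpow_nonneg hb p)

lemma rpow_mul_rpow_neg_mul_rpow_neg_le {a b t r : ℝ} (ha : 0 < a) (hb : 0 < b) (ht : 0 ≤ t)
    (htab : t ≤ a + b) (hr : 0 ≤ r) :
    t ^ r * (a ^ (-r) * b ^ (-r)) ≤ 2 ^ r * (a ^ (-r) + b ^ (-r)) := calc
  t ^ r * (a ^ (-r) * b ^ (-r)) ≤ 2 ^ r * (a ^ r + b ^ r) * (a ^ (-r) * b ^ (-r)) := by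
    gcongr
    exact (rpow_le_rpow ht htab hr).trans
      (add_rpow_le_two_rpow_mul_rpow_add_rpow ha.le hb.le hr)
  _ = 2 ^ r * (a ^ (-r) + b ^ (-r)) := by
    rw [rpow_neg ha.le, rpow_neg hb.le]
    field_simp
    ring

lemma le_mul_rpow_neg_of_mul_rpow_le {x K t r : ℝ} (ht : 0 < t) (h : x * t ^ r ≤ K) :
    x ≤ K * t ^ (-r) := by
  rwa [rpow_neg ht.le, ← div_eq_mul_inv, le_div_iff₀ (rpow_pos_of_pos ht r)]

section Convolution

variable {ι : Type*} {δ : ι → ι → ℝ} {r : ℝ}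

lemma summable_one_add_rpow_neg_mul (hδ : ∀ k l, 0 ≤ δ k l) (hr : 0 ≤ r) {k : ι}
    (hk : Summable fun m ↦ (1 + δ k m) ^ (-r)) (l : ι) :
    Summable fun m ↦ (1 + δ k m) ^ (-r) * (1 + δ m l) ^ (-r) := by
  refine hk.of_nonneg_of_le (fun m ↦ by have := hδ k m; have := hδ m l; positivity) fun m ↦ ?_
  have : 0 ≤ δ k m := hδ k m
  refine mul_le_of_le_one_right (by positivity) ?_
  exact rpow_le_one_of_one_le_of_nonpos (by linarith [hδ m l]) (neg_nonpos.mpr hr)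

theorem tsum_one_add_rpow_neg_mul_le (hδ : ∀ k l, 0 ≤ δ k l)
    (hδ_triangle : ∀ k m l, δ k l ≤ δ k m + δ m l) (hr : 0 ≤ r) {k l : ι}
    (hk : Summable fun m ↦ (1 + δ k m) ^ (-r)) (hl : Summable fun m ↦ (1 + δ m l) ^ (-r)) :
    (∑' m, (1 + δ k m) ^ (-r) * (1 + δ m l) ^ (-r)) * (1 + δ k l) ^ r ≤
      2 ^ r * (∑' m, (1 + δ k m) ^ (-r) + ∑' m, (1 + δ m l) ^ (-r)) := by
  rw [← tsum_mul_right, ← hk.tsum_add hl, ← tsum_mul_left]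
  refine (summable_one_add_rpow_neg_mul hδ hr hk l).mul_right _ |>.tsum_le_tsum (fun m ↦ ?_)
    ((hk.add hl).mul_left _)
  have := hδ k m; have := hδ m l; have := hδ k l
  rw [mul_comm]
  exact rpow_mul_rpow_neg_mul_rpow_neg_le (by positivity) (by positivity) (by positivity)
    (by linarith [hδ_triangle k m l]) hr


theorem norm_tsum_mul_mul_one_add_rpow_le {R : Type*} [NonUnitalSeminormedRing R]
    (hδ : ∀ k l, 0 ≤ δ k l) (hδ_triangle : ∀ k m l, δ k l ≤ δ k m + δ m l) (hr : 0 ≤ r)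
    {A B : ι → ι → R} {Ka Kb : ℝ}
    (hA : ∀ k l, ‖A k l‖ * (1 + δ k l) ^ r ≤ Ka)
    (hB : ∀ k l, ‖B k l‖ * (1 + δ k l) ^ r ≤ Kb)
    {k l : ι} (hk : Summable fun m ↦ (1 + δ k m) ^ (-r))
    (hl : Summable fun m ↦ (1 + δ m l) ^ (-r)) :
    ‖∑' m, A k m * B m l‖ * (1 + δ k l) ^ r ≤
      2 ^ r * (∑' m, (1 + δ k m) ^ (-r) + ∑' m, (1 + δ m l) ^ (-r)) * Ka * Kb := by
  have hw : ∀ k l, 0 < 1 + δ k l := fun k l ↦ by linarith [hδ k l]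
  have hKa : 0 ≤ Ka := (mul_nonneg (norm_nonneg _) (rpow_nonneg (hw k k).le r)).trans (hA k k)
  have hKb : 0 ≤ Kb := (mul_nonneg (norm_nonneg _) (rpow_nonneg (hw k k).le r)).trans (hB k k)
  have hterm (m : ι) :
      ‖A k m * B m l‖ ≤ Ka * Kb * ((1 + δ k m) ^ (-r) * (1 + δ m l) ^ (-r)) := calc
    ‖A k m * B m l‖ ≤ ‖A k m‖ * ‖B m l‖ := norm_mul_le _ _
    _ ≤ (Ka * (1 + δ k m) ^ (-r)) * (Kb * (1 + δ m l) ^ (-r)) :=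
      mul_le_mul (le_mul_rpow_neg_of_mul_rpow_le (hw k m) (hA k m))
        (le_mul_rpow_neg_of_mul_rpow_le (hw m l) (hB m l)) (norm_nonneg _)
        (mul_nonneg hKa (rpow_nonneg (hw k m).le _))
    _ = Ka * Kb * ((1 + δ k m) ^ (-r) * (1 + δ m l) ^ (-r)) := by ring
  have hsum := (summable_one_add_rpow_neg_mul hδ hr hk l).mul_left (Ka * Kb)
  have hnorm : Summable fun m ↦ ‖A k m * B m l‖ :=
    hsum.of_nonneg_of_le (fun _ ↦ norm_nonneg _) hterm
  calc ‖∑' m, A k m * B m l‖ * (1 + δ k l) ^ r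
      ≤ (Ka * Kb * ∑' m, (1 + δ k m) ^ (-r) * (1 + δ m l) ^ (-r)) * (1 + δ k l) ^ r := by
        refine mul_le_mul_of_nonneg_right ?_ (rpow_nonneg (hw k l).le r)
        rw [← tsum_mul_left]
        exact (norm_tsum_le_tsum_norm hnorm).trans (hnorm.tsum_le_tsum hterm hsum)
    _ = Ka * Kb * ((∑' m, (1 + δ k m) ^ (-r) * (1 + δ m l) ^ (-r)) * (1 + δ k l) ^ r) := by
        ring
    _ ≤ Ka * Kb * (2 ^ r * (∑' m, (1 + δ k m) ^ (-r) + ∑' m, (1 + δ m l) ^ (-r))) := by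
        gcongr Ka * Kb * ?_
        exact tsum_one_add_rpow_neg_mul_le hδ hδ_triangle hr hk hl
    _ = _ := by ring

end Convolution

lemma summable_one_add_abs_int_rpow_neg {s : ℝ} (hs : 1 < s) :
    Summable fun n : ℤ ↦ (1 + |(n : ℝ)|) ^ (-s) := by
  have hnat : Summable fun n : ℕ ↦ (1 + |(n : ℝ)|) ^ (-s) :=
    ((Real.summable_one_div_nat_add_rpow 1 s).mpr hs).congr fun n ↦ by
      rw [rpow_neg (by positivity), abs_of_nonneg (by positivity : (0 : ℝ) ≤ n + 1), one_div,
        add_comm, abs_of_nonneg (Nat.cast_nonneg n)]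
  exact .of_nat_of_neg (by simpa using hnat) (by simpa using hnat)

lemma summable_fin_pi_prod {α : Type*} {f : α → ℝ} (hf0 : ∀ a, 0 ≤ f a) (hf : Summable f) :
    ∀ n : ℕ, Summable fun x : Fin n → α ↦ ∏ j, f (x j)
  | 0 => .of_finite
  | n + 1 => by
    have h := hf.mul_of_nonneg (summable_fin_pi_prod hf0 hf n) hf0
      (fun x ↦ prod_nonneg fun j _ ↦ hf0 (x j))
    refine ((Fin.consEquiv fun _ ↦ α).symm.summable_iff.mpr h).congr fun x ↦ ?_
    rw [Fin.prod_univ_succ]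
    rfl

/-- The `ℓ¹` norm on `ℤ^d` (the library norm on `Fin d → ℤ` is the sup norm). -/
def l1Norm {d : ℕ} (x : Fin d → ℤ) : ℝ := ∑ j, |(x j : ℝ)|

lemma l1Norm_nonneg {d : ℕ} (x : Fin d → ℤ) : 0 ≤ l1Norm x :=
  sum_nonneg fun _ _ ↦ abs_nonneg _

lemma l1Norm_sub_le {d : ℕ} (k m l : Fin d → ℤ) :
    l1Norm (k - l) ≤ l1Norm (k - m) + l1Norm (m - l) := by
  simp only [l1Norm, ← sum_add_distrib, Pi.sub_apply, Int.cast_sub]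
  exact sum_le_sum fun j _ ↦ abs_sub_le _ _ _

lemma prod_one_add_abs_le_one_add_l1Norm_pow {d : ℕ} (x : Fin d → ℤ) :
    ∏ j, (1 + |(x j : ℝ)|) ≤ (1 + l1Norm x) ^ d := by
  calc ∏ j, (1 + |(x j : ℝ)|) ≤ ∏ _j : Fin d, (1 + l1Norm x) :=
        prod_le_prod (fun _ _ ↦ by positivity) fun j _ ↦ by
          gcongr
          exact single_le_sum (f := fun i ↦ |(x i : ℝ)|) (fun _ _ ↦ abs_nonneg _) (mem_univ j)
    _ = (1 + l1Norm x) ^ d := by simp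

theorem summable_one_add_l1Norm_rpow_neg {d : ℕ} {r : ℝ} (hr : (d : ℝ) < r) :
    Summable fun x : Fin d → ℤ ↦ (1 + l1Norm x) ^ (-r) := by
  rcases Nat.eq_zero_or_pos d with rfl | hd
  · exact .of_finite
  have hd : (0 : ℝ) < d := Nat.cast_pos.mpr hd
  have hs : 1 < r / d := (one_lt_div hd).mpr hr
  have hprod := summable_fin_pi_prod (fun _ ↦ by positivity)
    (summable_one_add_abs_int_rpow_neg hs) d
  refine hprod.of_nonneg_of_le (fun x ↦ by have := l1Norm_nonneg x; positivity) fun x ↦ ?_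
  have := l1Norm_nonneg x
  calc (1 + l1Norm x) ^ (-r) = ((1 + l1Norm x) ^ d) ^ (-(r / d)) := by
        rw [← rpow_natCast, ← rpow_mul (by positivity)]
        field_simp
    _ ≤ (∏ j, (1 + |(x j : ℝ)|)) ^ (-(r / d)) :=
        rpow_le_rpow_of_nonpos (prod_pos fun _ _ ↦ by positivity)
          (prod_one_add_abs_le_one_add_l1Norm_pow x) (by linarith)
    _ = ∏ j, (1 + |(x j : ℝ)|) ^ (-(r / d)) :=
        (finsetProd_rpow _ _ (fun _ _ ↦ by positivity) _).symm

/-- Jaffard/Schur algebra `S^∞_r`: for `r > d` there is a constant `C = C_{r,d} > 0`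
such that whenever `|A(k,l)|(1+|k-l|)^r ≤ Ka` and `|B(k,l)|(1+|k-l|)^r ≤ Kb` for all
`k, l ∈ ℤ^d`, the product satisfies `|(AB)(k,l)|(1+|k-l|)^r ≤ C·Ka·Kb`. -/
theorem stmt_16 {d : ℕ} (r : ℝ) (hr : (d : ℝ) < r) :
    ∃ C : ℝ, 0 < C ∧
      ∀ (A B : (Fin d → ℤ) → (Fin d → ℤ) → ℂ) (Ka Kb : ℝ),
        (∀ k l, ‖A k l‖ * (1 + ∑ j, |((k j - l j : ℤ) : ℝ)|) ^ r ≤ Ka) →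
        (∀ k l, ‖B k l‖ * (1 + ∑ j, |((k j - l j : ℤ) : ℝ)|) ^ r ≤ Kb) →
        ∀ k l, ‖∑' m : Fin d → ℤ, A k m * B m l‖ *
            (1 + ∑ j, |((k j - l j : ℤ) : ℝ)|) ^ r ≤ C * Ka * Kb := by
  have hr0 : 0 ≤ r := (Nat.cast_nonneg d).trans hr.le
  set w : (Fin d → ℤ) → ℝ := fun x ↦ (1 + l1Norm x) ^ (-r)
  have hw : Summable w := summable_one_add_l1Norm_rpow_neg hr
  have hS : 0 < ∑' x, w x :=
    hw.tsum_pos (fun x ↦ by have := l1Norm_nonneg x; positivity) 0 (by simp [w, l1Norm])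
  refine ⟨2 ^ r * (∑' x, w x + ∑' x, w x), by positivity, fun A B Ka Kb hA hB k l ↦ ?_⟩
  have key := norm_tsum_mul_mul_one_add_rpow_le (δ := fun k l ↦ l1Norm (k - l))
    (fun _ _ ↦ l1Norm_nonneg _) l1Norm_sub_le hr0 hA hB
    ((Equiv.subLeft k).summable_iff.mpr hw) ((Equiv.subRight l).summable_iff.mpr hw)
  have hSk : ∑' m, (1 + l1Norm (k - m)) ^ (-r) = ∑' x, w x := (Equiv.subLeft k).tsum_eq w
  have hSl : ∑' m, (1 + l1Norm (m - l)) ^ (-r) = ∑' x, w x := (Equiv.subRight l).tsum_eq w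
  rwa [hSk, hSl] at key
end
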